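/- Let E be an n-dimensional evolution algebra with strictly upper triangular structure matrix A = (a_{ij}) such that the superdiagonal product a_{12} a_{23} ⋯ a_{n-1,n} = 0. Then E^{2^k+1} ⊆ span{e_{k+2},...,e_n} for all 0 ≤ k ≤ n-2; in particular E^{2^{n-2}+1} ⊆ span{e_n} and E^{2^{n-1}+1} = 0. -/
import Mathlib


/-- Evolution algebra multiplication on `Fin n → ℂ` determined by a structure
matrix `A`: basis vectors satisfy `eᵢ · eⱼ = 0` for `i ≠ j` and
`eᵢ · eᵢ = ∑ k, A i k • e k`. -/
noncomputable def eMul {n : ℕ} (A : Matrix (Fin n) (Fin n) ℂ) (x y : Fin n → ℂ) : Fin n → ℂ :=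
  fun k => ∑ p, x p * y p * A p k

/-- Product of two subspaces: the span of all products. -/
noncomputable def sMul {n : ℕ} (A : Matrix (Fin n) (Fin n) ℂ) (S T : Submodule ℂ (Fin n → ℂ)) :
    Submodule ℂ (Fin n → ℂ) :=
  Submodule.span ℂ {z | ∃ x ∈ S, ∃ y ∈ T, z = eMul A x y}

/-- `dPow A k = E⁽ᵏ⁾`: `E⁽¹⁾ = E`, `E⁽ᵏ⁺¹⁾ = E⁽ᵏ⁾E⁽ᵏ⁾` (index 0 is a dummy). -/
noncomputable def dPow {n : ℕ} (A : Matrix (Fin n) (Fin n) ℂ) : ℕ → Submodule ℂ (Fin n → ℂ)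
  | 0 => ⊤
  | 1 => ⊤
  | (k+2) => sMul A (dPow A (k+1)) (dPow A (k+1))

/-- `rPow A k = E^{<k>}`: `E^{<1>} = E`, `E^{<k+1>} = E^{<k>}·E` (index 0 dummy). -/
noncomputable def rPow {n : ℕ} (A : Matrix (Fin n) (Fin n) ℂ) : ℕ → Submodule ℂ (Fin n → ℂ)
  | 0 => ⊤
  | 1 => ⊤
  | (k+2) => sMul A (rPow A (k+1)) ⊤

/-- `pPow A k = Eᵏ`: `E¹ = E`, `Eᵏ = ∑_{i=1}^{k-1} Eⁱ·E^{k-i}` (index 0 dummy). -/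
noncomputable def pPow {n : ℕ} (A : Matrix (Fin n) (Fin n) ℂ) : ℕ → Submodule ℂ (Fin n → ℂ)
  | 0 => ⊤
  | 1 => ⊤
  | (k+2) => ⨆ i : Fin (k+1), sMul A (pPow A (i.1+1)) (pPow A (k+1-i.1))
termination_by k => k
decreasing_by all_goals (have := i.isLt; omega)

/-- `W n t`: functions vanishing on coordinates `< t`. -/
noncomputable def W (n t : ℕ) : Submodule ℂ (Fin n → ℂ) where
  carrier := {x | ∀ j : Fin n, (j : ℕ) < t → x j = 0}
  add_mem' := fun hx hy j hj => by simp [hx j hj, hy j hj]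
  zero_mem' := fun j hj => rfl
  smul_mem' := fun c x hx j hj => by simp [hx j hj]

lemma mem_W {n t : ℕ} {x : Fin n → ℂ} : x ∈ W n t ↔ ∀ j : Fin n, (j : ℕ) < t → x j = 0 :=
  Iff.rfl

lemma W_anti {n s t : ℕ} (h : t ≤ s) : W n s ≤ W n t := fun x hx j hj => hx j (by omega)

lemma sMul_le_W_left {n t : ℕ} (A : Matrix (Fin n) (Fin n) ℂ)
    (hA : ∀ i j : Fin n, (j : ℕ) ≤ (i : ℕ) → A i j = 0)
    {S T : Submodule ℂ (Fin n → ℂ)} (hS : S ≤ W n t) : sMul A S T ≤ W n (t+1) := by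
  rw [sMul, Submodule.span_le]
  rintro z ⟨x, hx, y, hy, rfl⟩ j hj
  show ∑ p, x p * y p * A p j = 0
  apply Finset.sum_eq_zero
  intro p _
  by_cases hp : (p : ℕ) < t
  · rw [hS hx p hp]; ring
  · rw [hA p j (by omega)]; ring

lemma sMul_le_W_right {n t : ℕ} (A : Matrix (Fin n) (Fin n) ℂ)
    (hA : ∀ i j : Fin n, (j : ℕ) ≤ (i : ℕ) → A i j = 0)
    {S T : Submodule ℂ (Fin n → ℂ)} (hT : T ≤ W n t) : sMul A S T ≤ W n (t+1) := by
  rw [sMul, Submodule.span_le]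
  rintro z ⟨x, hx, y, hy, rfl⟩ j hj
  show ∑ p, x p * y p * A p j = 0
  apply Finset.sum_eq_zero
  intro p _
  by_cases hp : (p : ℕ) < t
  · rw [hT hy p hp]; ring
  · rw [hA p j (by omega)]; ring

lemma pPow_le_W {n : ℕ} (A : Matrix (Fin n) (Fin n) ℂ)
    (hA : ∀ i j : Fin n, (j : ℕ) ≤ (i : ℕ) → A i j = 0) :
    ∀ m t : ℕ, 2 ^ t + 1 ≤ m → pPow A m ≤ W n (t+1) := by
  intro m
  induction m using Nat.strong_induction_on with
  | _ m IH =>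
    rcases m with _ | _ | k
    · intro t hm; exact absurd hm (by have := Nat.one_le_two_pow (n := t); omega)
    · intro t hm; exact absurd hm (by have := Nat.one_le_two_pow (n := t); omega)
    · intro t hm
      rw [pPow]
      apply iSup_le
      intro i
      cases t with
      | zero =>
        exact sMul_le_W_left A hA (fun x _ j hj => absurd hj (Nat.not_lt_zero _))
      | succ t' =>
        have hpow : (2:ℕ) ^ (t'+1) = 2 ^ t' + 2 ^ t' := by rw [pow_succ]; omega
        have hi := i.isLt
        have hsplit : 2 ^ t' + 1 ≤ i.1 + 1 ∨ 2 ^ t' + 1 ≤ k + 1 - i.1 := by omega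
        rcases hsplit with h | h
        · exact sMul_le_W_left A hA (IH (i.1+1) (by omega) t' h)
        · exact sMul_le_W_right A hA (IH (k+1-i.1) (by omega) t' h)

lemma W_le_span {n t : ℕ} :
    W n t ≤ Submodule.span ℂ {v | ∃ j : Fin n, t ≤ (j : ℕ) ∧ v = Pi.single j (1 : ℂ)} := by
  intro x hx
  have hrep : x = ∑ j : Fin n, x j • (Pi.single j (1 : ℂ) : Fin n → ℂ) := by
    funext p
    simp [Finset.sum_apply, Pi.single_apply]
  rw [hrep]
  apply Submodule.sum_mem
  intro j _
  by_cases hj : t ≤ (j : ℕ)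
  · exact Submodule.smul_mem _ _ (Submodule.subset_span ⟨j, hj, rfl⟩)
  · rw [hx j (by omega)]; simp

/-- for an evolution algebra with strictly upper triangular
structure matrix whose superdiagonal product `a₁₂a₂₃⋯a_{n-1,n}` vanishes,
`E^{2ᵏ+1} ⊆ span{e_{k+2},…,e_n}` for all `0 ≤ k ≤ n-2`; in particular
`E^{2ⁿ⁻²+1} ⊆ span{e_n}` and `E^{2ⁿ⁻¹+1} = 0`. -/
theorem superdiagonal_product_zero {n : ℕ} (hn : 1 ≤ n)
    (A : Matrix (Fin n) (Fin n) ℂ)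
    (hA : ∀ i j : Fin n, (j : ℕ) ≤ (i : ℕ) → A i j = 0)
    (hsup : ∏ i : Fin (n - 1),
      A ⟨i.1, Nat.lt_of_lt_of_le i.2 (Nat.sub_le n 1)⟩ ⟨i.1 + 1, Nat.add_lt_of_lt_sub i.2⟩ = 0) :
    (∀ k : ℕ, k ≤ n - 2 →
      pPow A (2 ^ k + 1) ≤
        Submodule.span ℂ {v | ∃ j : Fin n, k + 1 ≤ (j : ℕ) ∧ v = Pi.single j (1 : ℂ)}) ∧
    pPow A (2 ^ (n - 2) + 1) ≤
      Submodule.span ℂ {Pi.single (⟨n - 1, by omega⟩ : Fin n) (1 : ℂ)} ∧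
    pPow A (2 ^ (n - 1) + 1) = ⊥ := by
  refine ⟨fun k _ => (pPow_le_W A hA _ k le_rfl).trans W_le_span, ?_, ?_⟩
  · have hW : W n (n - 1) ≤
        Submodule.span ℂ {Pi.single (⟨n - 1, by omega⟩ : Fin n) (1 : ℂ)} := ?_
    · exact (pPow_le_W A hA _ (n-2) le_rfl).trans ((W_anti (by omega)).trans hW)
    intro x hx
    rw [Submodule.mem_span_singleton]
    refine ⟨x ⟨n-1, by omega⟩, ?_⟩
    funext p
    by_cases hp : p = (⟨n-1, by omega⟩ : Fin n)
    · subst hp; simp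
    · have hp' : (p : ℕ) < n - 1 := by
        have := p.isLt
        have : (p : ℕ) ≠ n - 1 := fun h => hp (Fin.ext h)
        omega
      simp [Pi.single_apply, hp, hx p hp']
  · refine le_antisymm ((pPow_le_W A hA _ (n-1) le_rfl).trans ?_) bot_le
    intro x hx
    have : x = 0 := funext fun j => hx j (by have := j.isLt; omega)
    simp [this]
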